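/- (Stability of biadditive equations) Let T > 0 and let g : [−T,T) × [−T,T) → ℂ be θ-biadditive, i.e., |g(x₁+x₂, y) − g(x₁,y) − g(x₂,y)| ≤ θ and |g(x, y₁+y₂) − g(x,y₁) − g(x,y₂)| ≤ θ whenever all arguments and sums lie in [−T,T). Then there exists a biadditive function G on [−T,T) × [−T,T) with |g(x,y) − G(x,y)| ≤ 6θ for all x, y ∈ [−T,T). Moreover, if g is symmetric then G can be chosen symmetric. -/

import Mathlib

/-!
Extend a `δ`-approximately additive `f` on `[-T, T)` to `ℝ` by `x = r + n T ↦ f r - n • f (-T)`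
with `r ∈ (-T, 0]`. The extension is within `δ` of `f` and `2δ`-approximately additive on all
of `ℝ`, so Hyers' limit of `2⁻ᵏ • ext (2ᵏ x)` is an additive function within `3δ` of `f`.
Applied to `x ↦ g x y`, this is additive in `x` but in `y` only up to a term linear in `x`,
because the Hyers limit of the extension of a bounded `h` is `x ↦ -(x / T) • h (-T)`.
Cancelling that term with a correction built from `g (-T)`, weighted by `|x / T| ≤ 1`, costs
another `3δ`. In the symmetric case, average `G x y` and `G y x`.
-/

open Filter Topology Set

lemma tendsto_inv_two_pow_nhds_zero : Tendsto (fun k : ℕ ↦ ((2 : ℝ) ^ k)⁻¹) atTop (𝓝 0) :=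
  tendsto_inv_atTop_zero.comp (tendsto_pow_atTop_atTop_of_one_lt one_lt_two)

section Hyers

variable {E F : Type*} [AddCommMonoid E] [NormedAddCommGroup F] [NormedSpace ℝ F]

noncomputable def hyersSeq (φ : E → F) (x : E) (k : ℕ) : F := ((2 : ℝ) ^ k)⁻¹ • φ (2 ^ k • x)

noncomputable def hyersLimit (φ : E → F) (x : E) : F := limUnder atTop (hyersSeq φ x)

variable {φ : E → F} {δ : ℝ}

lemma hyersSeq_zero (φ : E → F) (x : E) : hyersSeq φ x 0 = φ x := by
  simp [hyersSeq]

lemma dist_hyersSeq_succ_le (hφ : ∀ x y, ‖φ (x + y) - φ x - φ y‖ ≤ δ) (x : E) (k : ℕ) :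
    dist (hyersSeq φ x k) (hyersSeq φ x (k + 1)) ≤ δ / 2 * (1 / 2) ^ k := by
  have hdouble : 2 ^ (k + 1) • x = 2 ^ k • x + 2 ^ k • x := by
    rw [pow_succ, mul_nsmul, two_nsmul]
  have key : hyersSeq φ x k - hyersSeq φ x (k + 1) =
      -((2 : ℝ) ^ (k + 1))⁻¹ • (φ (2 ^ k • x + 2 ^ k • x) - φ (2 ^ k • x) - φ (2 ^ k • x)) := by
    rw [hyersSeq, hyersSeq, hdouble, pow_succ]
    module
  rw [dist_eq_norm, key, norm_smul]
  calc _ ≤ ‖-((2 : ℝ) ^ (k + 1))⁻¹‖ * δ := by gcongr; exact hφ _ _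
    _ = δ / 2 * (1 / 2) ^ k := by
      rw [norm_neg, norm_inv, norm_pow, Real.norm_two, pow_succ, one_div, inv_pow]
      field_simp

lemma norm_hyersSeq_add_sub_le (hφ : ∀ x y, ‖φ (x + y) - φ x - φ y‖ ≤ δ) (x y : E) (k : ℕ) :
    ‖hyersSeq φ (x + y) k - hyersSeq φ x k - hyersSeq φ y k‖ ≤ δ * ((2 : ℝ) ^ k)⁻¹ := by
  have key : hyersSeq φ (x + y) k - hyersSeq φ x k - hyersSeq φ y k =
      ((2 : ℝ) ^ k)⁻¹ • (φ (2 ^ k • x + 2 ^ k • y) - φ (2 ^ k • x) - φ (2 ^ k • y)) := by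
    rw [hyersSeq, hyersSeq, hyersSeq, smul_add, smul_sub, smul_sub]
  rw [key, norm_smul, norm_inv, norm_pow, Real.norm_two, mul_comm]
  gcongr
  exact hφ _ _

variable [CompleteSpace F]

lemma tendsto_hyersSeq (hφ : ∀ x y, ‖φ (x + y) - φ x - φ y‖ ≤ δ) (x : E) :
    Tendsto (hyersSeq φ x) atTop (𝓝 (hyersLimit φ x)) :=
  (cauchySeq_of_le_geometric _ _ (by norm_num) (dist_hyersSeq_succ_le hφ x)).tendsto_limUnder

lemma norm_sub_hyersLimit_le (hφ : ∀ x y, ‖φ (x + y) - φ x - φ y‖ ≤ δ) (x : E) :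
    ‖φ x - hyersLimit φ x‖ ≤ δ := by
  have h := dist_le_of_le_geometric_of_tendsto₀ _ _ (by norm_num) (dist_hyersSeq_succ_le hφ x)
    (tendsto_hyersSeq hφ x)
  rwa [hyersSeq_zero, dist_eq_norm, show δ / 2 / (1 - 1 / 2) = δ by ring] at h

lemma hyersLimit_add (hφ : ∀ x y, ‖φ (x + y) - φ x - φ y‖ ≤ δ) (x y : E) :
    hyersLimit φ (x + y) = hyersLimit φ x + hyersLimit φ y := by
  have hlim := ((tendsto_hyersSeq hφ (x + y)).sub (tendsto_hyersSeq hφ x)).sub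
    (tendsto_hyersSeq hφ y)
  have hzero : Tendsto (fun k ↦ hyersSeq φ (x + y) k - hyersSeq φ x k - hyersSeq φ y k)
      atTop (𝓝 0) :=
    squeeze_zero_norm (norm_hyersSeq_add_sub_le hφ x y) <| by
      simpa using tendsto_inv_two_pow_nhds_zero.const_mul δ
  rw [← sub_eq_zero, ← sub_sub]
  exact tendsto_nhds_unique hlim hzero

end Hyers

section ApproxAddOn

variable {E F : Type*} [NormedAddCommGroup F]

def ApproxAddOn [Add E] (s : Set E) (δ : ℝ) (f : E → F) : Prop :=
  ∀ x ∈ s, ∀ y ∈ s, x + y ∈ s → ‖f (x + y) - f x - f y‖ ≤ δ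

lemma ApproxAddOn.norm_map_zero_le [AddZeroClass E] {s : Set E} {δ : ℝ} {f : E → F}
    (hf : ApproxAddOn s δ f) (h0 : (0 : E) ∈ s) : ‖f 0‖ ≤ δ := by
  simpa using hf 0 h0 0 h0 (by simpa using h0)

end ApproxAddOn

section QuasiPeriodicExt

variable {F : Type*} [NormedAddCommGroup F] {T δ : ℝ}

noncomputable def quasiPeriodicExt (hT : 0 < T) (f : ℝ → F) (x : ℝ) : F :=
  f (toIocMod hT (-T) x) - toIocDiv hT (-T) x • f (-T)

variable (hT : 0 < T) {f : ℝ → F}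
include hT

lemma Ioc_neg_zero_subset_Ico : Ioc (-T) 0 ⊆ Ico (-T) T :=
  fun _ hz ↦ ⟨hz.1.le, hz.2.trans_lt hT⟩

lemma toIocMod_neg_mem_Ioc (u : ℝ) : toIocMod hT (-T) u ∈ Ioc (-T) 0 := by
  simpa using toIocMod_mem_Ioc hT (-T) u

lemma exists_mem_Ioc_add_zsmul (u : ℝ) : ∃ a ∈ Ioc (-T) 0, ∃ m : ℤ, u = a + m • T :=
  ⟨_, toIocMod_neg_mem_Ioc hT u, _, (toIocMod_add_toIocDiv_zsmul hT (-T) u).symm⟩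

lemma quasiPeriodicExt_add_zsmul (f : ℝ → F) (x : ℝ) (m : ℤ) :
    quasiPeriodicExt hT f (x + m • T) = quasiPeriodicExt hT f x - m • f (-T) := by
  simp only [quasiPeriodicExt, toIocMod_add_zsmul, toIocDiv_add_zsmul, add_smul]
  abel

lemma quasiPeriodicExt_of_mem_Ioc {s : ℝ} (hs : s ∈ Ioc (-T) 0) :
    quasiPeriodicExt hT f s = f s := by
  have hs' : s ∈ Ioc (-T) (-T + T) := by rwa [neg_add_cancel]
  have hdiv : toIocDiv hT (-T) s = 0 := toIocDiv_eq_of_sub_zsmul_mem_Ioc hT (by simpa using hs')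
  simp [quasiPeriodicExt, hdiv, (toIocMod_eq_self hT).2 hs']

lemma quasiPeriodicExt_add_zsmul_of_mem_Ioc {s : ℝ} (hs : s ∈ Ioc (-T) 0) (m : ℤ) :
    quasiPeriodicExt hT f (s + m • T) = f s - m • f (-T) := by
  rw [quasiPeriodicExt_add_zsmul, quasiPeriodicExt_of_mem_Ioc hT hs]

lemma norm_sub_quasiPeriodicExt_le (hf : ApproxAddOn (Ico (-T) T) δ f) {x : ℝ}
    (hx : x ∈ Ico (-T) T) : ‖f x - quasiPeriodicExt hT f x‖ ≤ δ := by
  have h0 : (0 : ℝ) ∈ Ico (-T) T := ⟨by linarith, hT⟩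
  rcases hx.1.eq_or_lt with rfl | hx₁
  · have h := quasiPeriodicExt_add_zsmul_of_mem_Ioc hT (f := f) (s := 0) ⟨by linarith, le_rfl⟩ (-1)
    rw [zero_add, neg_one_zsmul, neg_one_zsmul, sub_neg_eq_add] at h
    rw [h, sub_add_cancel_right, norm_neg]
    exact hf.norm_map_zero_le h0
  rcases le_or_gt x 0 with hx₂ | hx₂
  · rw [quasiPeriodicExt_of_mem_Ioc hT ⟨hx₁, hx₂⟩, sub_self, norm_zero]
    exact (norm_nonneg _).trans (hf.norm_map_zero_le h0)
  · have h := quasiPeriodicExt_add_zsmul_of_mem_Ioc hT (f := f) (s := x - T)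
      ⟨by linarith, by linarith [hx.2]⟩ 1
    rw [one_zsmul, one_zsmul, sub_add_cancel] at h
    have hdef := hf x hx (-T) ⟨le_rfl, by linarith⟩ ⟨by linarith, by linarith [hx.2]⟩
    rw [← sub_eq_add_neg] at hdef
    rwa [h, ← norm_neg, show -(f x - (f (x - T) - f (-T))) = f (x - T) - f x - f (-T) by abel]

lemma norm_quasiPeriodicExt_add_sub_le_of_mem_Ioc (hf : ApproxAddOn (Ico (-T) T) δ f) {a b : ℝ}
    (ha : a ∈ Ioc (-T) 0) (hb : b ∈ Ioc (-T) 0) :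
    ‖quasiPeriodicExt hT f (a + b) - f a - f b‖ ≤ 2 * δ := by
  have hδ : 0 ≤ δ := (norm_nonneg _).trans (hf.norm_map_zero_le ⟨by linarith, hT⟩)
  have hI := Ioc_neg_zero_subset_Ico hT
  rcases lt_or_ge (-T) (a + b) with hab | hab
  · rw [quasiPeriodicExt_of_mem_Ioc hT ⟨hab, by linarith [ha.2, hb.2]⟩]
    linarith [hf a (hI ha) b (hI hb) (hI ⟨hab, by linarith [ha.2, hb.2]⟩)]
  · -- `a + b` wraps around: pass through `b + T ∈ (0, T)`
    have hbT : b + T ∈ Ico (-T) T := ⟨by linarith [hb.1], by linarith [ha.1]⟩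
    have h := quasiPeriodicExt_add_zsmul_of_mem_Ioc hT (f := f) (s := a + b + T)
      ⟨by linarith [ha.1, hb.1], by linarith⟩ (-1)
    rw [neg_one_zsmul, neg_one_zsmul, sub_neg_eq_add, add_neg_cancel_right] at h
    have h₁ := hf a (hI ha) (b + T) hbT
      (by rw [← add_assoc]; exact hI ⟨by linarith [hb.1, ha.1], by linarith⟩)
    have h₂ := hf (b + T) hbT (-T) ⟨le_rfl, by linarith⟩ (by rw [add_neg_cancel_right]; exact hI hb)
    rw [add_neg_cancel_right] at h₂
    rw [h, show f (a + b + T) + f (-T) - f a - f b =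
      (f (a + (b + T)) - f a - f (b + T)) - (f b - f (b + T) - f (-T)) by rw [← add_assoc]; abel]
    exact (norm_sub_le _ _).trans (by linarith)

lemma norm_quasiPeriodicExt_add_sub_le (hf : ApproxAddOn (Ico (-T) T) δ f) (u v : ℝ) :
    ‖quasiPeriodicExt hT f (u + v) - quasiPeriodicExt hT f u - quasiPeriodicExt hT f v‖
      ≤ 2 * δ := by
  obtain ⟨a, ha, m, rfl⟩ := exists_mem_Ioc_add_zsmul hT u
  obtain ⟨b, hb, n, rfl⟩ := exists_mem_Ioc_add_zsmul hT v
  rw [show a + m • T + (b + n • T) = a + b + (m + n) • T by rw [add_zsmul]; abel,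
    quasiPeriodicExt_add_zsmul, quasiPeriodicExt_add_zsmul_of_mem_Ioc hT ha,
    quasiPeriodicExt_add_zsmul_of_mem_Ioc hT hb, add_zsmul]
  convert norm_quasiPeriodicExt_add_sub_le_of_mem_Ioc hT hf ha hb using 2
  abel

lemma tendsto_inv_two_pow_mul_toIocDiv (x : ℝ) :
    Tendsto (fun k : ℕ ↦ ((2 : ℝ) ^ k)⁻¹ * toIocDiv hT (-T) (2 ^ k • x)) atTop (𝓝 (x / T)) := by
  refine tendsto_sub_nhds_zero_iff.1 (squeeze_zero_norm (fun k ↦ ?_) tendsto_inv_two_pow_nhds_zero)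
  simp only [nsmul_eq_mul, Nat.cast_pow, Nat.cast_ofNat]
  obtain ⟨h₁, h₂⟩ := sub_toIocDiv_zsmul_mem_Ioc hT (-T) (2 ^ k * x)
  rw [zsmul_eq_mul] at h₁ h₂
  have h2k : (0 : ℝ) < 2 ^ k := by positivity
  have e : ((2 : ℝ) ^ k)⁻¹ * toIocDiv hT (-T) (2 ^ k * x) - x / T
      = (toIocDiv hT (-T) (2 ^ k * x) * T - 2 ^ k * x) / (2 ^ k * T) := by
    field_simp
  have hpos : (0 : ℝ) < 2 ^ k * T := by positivity
  rw [e, Real.norm_of_nonneg (div_nonneg (by linarith) hpos.le), div_le_iff₀ hpos,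
    inv_mul_cancel_left₀ h2k.ne']
  linarith

end QuasiPeriodicExt

section AdditiveApprox

variable {F : Type*} [NormedAddCommGroup F] [NormedSpace ℝ F] {T δ : ℝ} (hT : 0 < T)
include hT

lemma tendsto_hyersSeq_quasiPeriodicExt_of_bounded {h : ℝ → F} {C : ℝ}
    (hb : ∀ z ∈ Ioc (-T) 0, ‖h z‖ ≤ C) (x : ℝ) :
    Tendsto (hyersSeq (quasiPeriodicExt hT h) x) atTop (𝓝 (-(x / T) • h (-T))) := by
  have e : hyersSeq (quasiPeriodicExt hT h) x = fun k ↦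
      ((2 : ℝ) ^ k)⁻¹ • h (toIocMod hT (-T) (2 ^ k • x))
        - (((2 : ℝ) ^ k)⁻¹ * toIocDiv hT (-T) (2 ^ k • x)) • h (-T) := by
    funext k
    rw [hyersSeq, quasiPeriodicExt, smul_sub, mul_smul, Int.cast_smul_eq_zsmul]
  rw [e, neg_smul, ← zero_sub ((x / T) • h (-T))]
  refine .sub (squeeze_zero_norm (a := fun k : ℕ ↦ ((2 : ℝ) ^ k)⁻¹ * C) (fun k ↦ ?_)
    (by simpa using tendsto_inv_two_pow_nhds_zero.mul_const C))
    ((tendsto_inv_two_pow_mul_toIocDiv hT x).smul_const (h (-T)))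
  rw [norm_smul, norm_inv, norm_pow, Real.norm_two]
  gcongr
  exact hb _ (toIocMod_neg_mem_Ioc hT _)

noncomputable def additiveApprox (hT : 0 < T) (f : ℝ → F) : ℝ → F :=
  hyersLimit (quasiPeriodicExt hT f)

variable [CompleteSpace F] {f : ℝ → F}

lemma additiveApprox_add (hf : ApproxAddOn (Ico (-T) T) δ f) (x y : ℝ) :
    additiveApprox hT f (x + y) = additiveApprox hT f x + additiveApprox hT f y :=
  hyersLimit_add (norm_quasiPeriodicExt_add_sub_le hT hf) x y

lemma norm_sub_additiveApprox_le (hf : ApproxAddOn (Ico (-T) T) δ f) {x : ℝ}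
    (hx : x ∈ Ico (-T) T) : ‖f x - additiveApprox hT f x‖ ≤ 3 * δ := by
  have h₁ := norm_sub_quasiPeriodicExt_le hT hf hx
  have h₂ : ‖quasiPeriodicExt hT f x - additiveApprox hT f x‖ ≤ 2 * δ :=
    norm_sub_hyersLimit_le (norm_quasiPeriodicExt_add_sub_le hT hf) x
  linarith [norm_sub_le_norm_sub_add_norm_sub (f x) (quasiPeriodicExt hT f x)
    (additiveApprox hT f x)]

lemma additiveApprox_sub_sub {f₁ f₂ f₃ : ℝ → F} {C : ℝ} (hf₁ : ApproxAddOn (Ico (-T) T) δ f₁)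
    (hf₂ : ApproxAddOn (Ico (-T) T) δ f₂) (hf₃ : ApproxAddOn (Ico (-T) T) δ f₃)
    (hb : ∀ z ∈ Ico (-T) T, ‖f₁ z - f₂ z - f₃ z‖ ≤ C) (x : ℝ) :
    additiveApprox hT f₁ x - additiveApprox hT f₂ x - additiveApprox hT f₃ x
      = -(x / T) • (f₁ (-T) - f₂ (-T) - f₃ (-T)) := by
  have hlim := ((tendsto_hyersSeq (norm_quasiPeriodicExt_add_sub_le hT hf₁) x).sub
    (tendsto_hyersSeq (norm_quasiPeriodicExt_add_sub_le hT hf₂) x)).sub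
    (tendsto_hyersSeq (norm_quasiPeriodicExt_add_sub_le hT hf₃) x)
  have hdiff := tendsto_hyersSeq_quasiPeriodicExt_of_bounded hT (h := f₁ - f₂ - f₃)
    (fun z hz ↦ hb z (Ioc_neg_zero_subset_Ico hT hz)) x
  refine tendsto_nhds_unique hlim (hdiff.congr fun k ↦ ?_)
  simp only [hyersSeq, quasiPeriodicExt, Pi.sub_apply, smul_sub]
  abel

end AdditiveApprox

section Biadditive

def IsBiadditiveOn {E F : Type*} [Add E] [Add F] (s : Set E) (G : E → E → F) : Prop :=
  (∀ x₁ x₂ y, x₁ ∈ s → x₂ ∈ s → y ∈ s → x₁ + x₂ ∈ s → G (x₁ + x₂) y = G x₁ y + G x₂ y) ∧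
    (∀ x y₁ y₂, x ∈ s → y₁ ∈ s → y₂ ∈ s → y₁ + y₂ ∈ s → G x (y₁ + y₂) = G x y₁ + G x y₂)

variable {E F : Type*} [NormedAddCommGroup F] [NormedSpace ℝ F]

noncomputable def symmetrize (G : E → E → F) (x y : E) : F := (2 : ℝ)⁻¹ • (G x y + G y x)

lemma symmetrize_comm (G : E → E → F) (x y : E) : symmetrize G x y = symmetrize G y x := by
  rw [symmetrize, symmetrize, add_comm]

lemma IsBiadditiveOn.symmetrize [Add E] {s : Set E} {G : E → E → F} (hG : IsBiadditiveOn s G) :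
    IsBiadditiveOn s (symmetrize G) := by
  constructor
  · intro x₁ x₂ y hx₁ hx₂ hy hx
    simp only [_root_.symmetrize, hG.1 x₁ x₂ y hx₁ hx₂ hy hx, hG.2 y x₁ x₂ hy hx₁ hx₂ hx]
    module
  · intro x y₁ y₂ hx hy₁ hy₂ hy
    simp only [_root_.symmetrize, hG.2 x y₁ y₂ hx hy₁ hy₂ hy, hG.1 y₁ y₂ x hy₁ hy₂ hx hy]
    module

lemma norm_sub_symmetrize_le {g G : E → E → F} {c : ℝ} {x y : E} (hsym : g x y = g y x)
    (hxy : ‖g x y - G x y‖ ≤ c) (hyx : ‖g y x - G y x‖ ≤ c) :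
    ‖g x y - symmetrize G x y‖ ≤ c := by
  have e : g x y - symmetrize G x y = (2 : ℝ)⁻¹ • ((g x y - G x y) + (g y x - G y x)) := by
    rw [symmetrize, ← hsym]
    module
  rw [e, norm_smul, Real.norm_of_nonneg (by norm_num)]
  linarith [norm_add_le (g x y - G x y) (g y x - G y x)]

end Biadditive

section BiadditiveApprox

variable {F : Type*} [NormedAddCommGroup F] [NormedSpace ℝ F] [CompleteSpace F] {T δ : ℝ}
  (hT : 0 < T) {g : ℝ → ℝ → F}
include hT

/-- `y ↦ additiveApprox hT (g · y) x` is additive only up to `-(x / T)` times the defect of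
`g (-T)`; the second summand cancels this. -/
noncomputable def biadditiveApprox (hT : 0 < T) (g : ℝ → ℝ → F) (x y : ℝ) : F :=
  additiveApprox hT (g · y) x + (x / T) • (g (-T) y - additiveApprox hT (g (-T)) y)

lemma isBiadditiveOn_biadditiveApprox
    (hrow : ∀ y ∈ Ico (-T) T, ApproxAddOn (Ico (-T) T) δ (g · y))
    (hcol : ∀ x ∈ Ico (-T) T, ApproxAddOn (Ico (-T) T) δ (g x)) :
    IsBiadditiveOn (Ico (-T) T) (biadditiveApprox hT g) := by
  constructor
  · intro x₁ x₂ y _ _ hy _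
    simp only [biadditiveApprox, additiveApprox_add hT (hrow y hy), add_div, add_smul]
    abel
  · intro x y₁ y₂ _ hy₁ hy₂ hy
    have ht := additiveApprox_sub_sub hT (hrow _ hy) (hrow _ hy₁) (hrow _ hy₂)
      (fun z hz ↦ hcol z hz y₁ hy₁ y₂ hy₂ hy) x
    simp only [biadditiveApprox, additiveApprox_add hT (hcol (-T) ⟨le_rfl, by linarith⟩) y₁ y₂]
    linear_combination (norm := module) ht

lemma norm_sub_biadditiveApprox_le
    (hrow : ∀ y ∈ Ico (-T) T, ApproxAddOn (Ico (-T) T) δ (g · y))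
    (hcol : ∀ x ∈ Ico (-T) T, ApproxAddOn (Ico (-T) T) δ (g x)) {x y : ℝ}
    (hx : x ∈ Ico (-T) T) (hy : y ∈ Ico (-T) T) :
    ‖g x y - biadditiveApprox hT g x y‖ ≤ 6 * δ := by
  have h₁ := norm_sub_additiveApprox_le hT (hrow y hy) hx
  have h₂ := norm_sub_additiveApprox_le hT (hcol (-T) ⟨le_rfl, by linarith⟩) hy
  have hc : ‖x / T‖ ≤ 1 := by
    rw [norm_div, Real.norm_of_nonneg hT.le, div_le_one hT, Real.norm_eq_abs]
    exact abs_le.2 ⟨hx.1, hx.2.le⟩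
  calc ‖g x y - biadditiveApprox hT g x y‖
      = ‖(g x y - additiveApprox hT (g · y) x)
          - (x / T) • (g (-T) y - additiveApprox hT (g (-T)) y)‖ := by
        rw [biadditiveApprox, sub_add_eq_sub_sub]
    _ ≤ ‖g x y - additiveApprox hT (g · y) x‖
          + ‖x / T‖ * ‖g (-T) y - additiveApprox hT (g (-T)) y‖ := by
        rw [← norm_smul]; exact norm_sub_le _ _
    _ ≤ 3 * δ + 1 * (3 * δ) := by gcongr
    _ = 6 * δ := by ring

end BiadditiveApprox

theorem biadditive_stability_general (T θ : ℝ) (hT : 0 < T)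
    (g : ℝ → ℝ → ℂ)
    (h1 : ∀ x₁ x₂ y : ℝ, x₁ ∈ Set.Ico (-T) T → x₂ ∈ Set.Ico (-T) T →
      y ∈ Set.Ico (-T) T → x₁ + x₂ ∈ Set.Ico (-T) T →
      ‖g (x₁ + x₂) y - g x₁ y - g x₂ y‖ ≤ θ)
    (h2 : ∀ x y₁ y₂ : ℝ, x ∈ Set.Ico (-T) T → y₁ ∈ Set.Ico (-T) T →
      y₂ ∈ Set.Ico (-T) T → y₁ + y₂ ∈ Set.Ico (-T) T →
      ‖g x (y₁ + y₂) - g x y₁ - g x y₂‖ ≤ θ) :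
    ∃ G : ℝ → ℝ → ℂ,
      (∀ x₁ x₂ y : ℝ, x₁ ∈ Set.Ico (-T) T → x₂ ∈ Set.Ico (-T) T →
        y ∈ Set.Ico (-T) T → x₁ + x₂ ∈ Set.Ico (-T) T →
        G (x₁ + x₂) y = G x₁ y + G x₂ y) ∧
      (∀ x y₁ y₂ : ℝ, x ∈ Set.Ico (-T) T → y₁ ∈ Set.Ico (-T) T →
        y₂ ∈ Set.Ico (-T) T → y₁ + y₂ ∈ Set.Ico (-T) T →
        G x (y₁ + y₂) = G x y₁ + G x y₂) ∧
      (∀ x y : ℝ, x ∈ Set.Ico (-T) T → y ∈ Set.Ico (-T) T →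
        ‖g x y - G x y‖ ≤ 6 * θ) ∧
      ((∀ x y : ℝ, x ∈ Set.Ico (-T) T → y ∈ Set.Ico (-T) T → g x y = g y x) →
        ∀ x y : ℝ, x ∈ Set.Ico (-T) T → y ∈ Set.Ico (-T) T → G x y = G y x) := by
  have hrow : ∀ y ∈ Ico (-T) T, ApproxAddOn (Ico (-T) T) θ (g · y) :=
    fun y hy x₁ hx₁ x₂ hx₂ hx ↦ h1 x₁ x₂ y hx₁ hx₂ hy hx
  have hcol : ∀ x ∈ Ico (-T) T, ApproxAddOn (Ico (-T) T) θ (g x) :=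
    fun x hx y₁ hy₁ y₂ hy₂ hy ↦ h2 x y₁ y₂ hx hy₁ hy₂ hy
  have hG := isBiadditiveOn_biadditiveApprox hT hrow hcol
  have hbound := fun x y (hx : x ∈ Ico (-T) T) (hy : y ∈ Ico (-T) T) ↦
    norm_sub_biadditiveApprox_le hT hrow hcol hx hy
  by_cases hsym : ∀ x y, x ∈ Ico (-T) T → y ∈ Ico (-T) T → g x y = g y x
  · refine ⟨symmetrize (biadditiveApprox hT g), hG.symmetrize.1, hG.symmetrize.2,
      fun x y hx hy ↦ ?_, fun _ x y _ _ ↦ symmetrize_comm _ x y⟩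
    exact norm_sub_symmetrize_le (hsym x y hx hy) (hbound x y hx hy) (hbound y x hy hx)
  · exact ⟨biadditiveApprox hT g, hG.1, hG.2, hbound, fun h ↦ absurd h hsym⟩

/-- Stability of biadditive functional equations on `[−T,T) × [−T,T)`:
a θ-biadditive `g` is within `6θ` of a biadditive `G`; moreover if `g` is
symmetric, `G` can be chosen symmetric. -/
theorem biadditive_stability (T θ : ℝ) (hT : 0 < T) (hθ : 0 ≤ θ)
    (g : ℝ → ℝ → ℂ)
    (h1 : ∀ x₁ x₂ y : ℝ, x₁ ∈ Set.Ico (-T) T → x₂ ∈ Set.Ico (-T) T →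
      y ∈ Set.Ico (-T) T → x₁ + x₂ ∈ Set.Ico (-T) T →
      ‖g (x₁ + x₂) y - g x₁ y - g x₂ y‖ ≤ θ)
    (h2 : ∀ x y₁ y₂ : ℝ, x ∈ Set.Ico (-T) T → y₁ ∈ Set.Ico (-T) T →
      y₂ ∈ Set.Ico (-T) T → y₁ + y₂ ∈ Set.Ico (-T) T →
      ‖g x (y₁ + y₂) - g x y₁ - g x y₂‖ ≤ θ) :
    ∃ G : ℝ → ℝ → ℂ,
      (∀ x₁ x₂ y : ℝ, x₁ ∈ Set.Ico (-T) T → x₂ ∈ Set.Ico (-T) T →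
        y ∈ Set.Ico (-T) T → x₁ + x₂ ∈ Set.Ico (-T) T →
        G (x₁ + x₂) y = G x₁ y + G x₂ y) ∧
      (∀ x y₁ y₂ : ℝ, x ∈ Set.Ico (-T) T → y₁ ∈ Set.Ico (-T) T →
        y₂ ∈ Set.Ico (-T) T → y₁ + y₂ ∈ Set.Ico (-T) T →
        G x (y₁ + y₂) = G x y₁ + G x y₂) ∧
      (∀ x y : ℝ, x ∈ Set.Ico (-T) T → y ∈ Set.Ico (-T) T →
        ‖g x y - G x y‖ ≤ 6 * θ) ∧
      ((∀ x y : ℝ, x ∈ Set.Ico (-T) T → y ∈ Set.Ico (-T) T → g x y = g y x) →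
        ∀ x y : ℝ, x ∈ Set.Ico (-T) T → y ∈ Set.Ico (-T) T → G x y = G y x) :=
  biadditive_stability_general T θ hT g h1 h2
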